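/- arXiv:1503.04873 — 2 statements merged into one kernel-verified Lean document; each statement's English description precedes it below -/
import Mathlib

section
/- Let x, y ∈ P have a common upper bound in P with respect to ≤, and let z ∈ P be a least upper bound of x and y. If θ(y) > θ(x), then there exists t ∈ ℕ such that z = y·b^t. -/
open scoped Classical

namespace BSpaper

/-- The single Baumslag–Solitar relator `a * b^c * (b^d * a)⁻¹` on two generators
(`true` plays the role of `a`, `false` the role of `b`). -/
def rels (c d : ℕ) : Set (FreeGroup Bool) :=
  {FreeGroup.of true * FreeGroup.of false ^ c * (FreeGroup.of false ^ d * FreeGroup.of true)⁻¹}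

/-- The Baumslag–Solitar group `BS(c,d) = ⟨a, b ∣ a b^c = b^d a⟩`. -/
abbrev Grp (c d : ℕ) := PresentedGroup (rels c d)

variable (c d : ℕ)

/-- The generator `a`. -/
def a : Grp c d := PresentedGroup.of true

/-- The generator `b`. -/
def b : Grp c d := PresentedGroup.of false

/-- The submonoid `P` of `BS(c,d)` generated by `a` and `b`. -/
def P : Submonoid (Grp c d) := Submonoid.closure {a c d, b c d}

/-- The word `b^{s₀} a b^{s₁} a ⋯ b^{s_{k-1}} a` associated to a list of digits `s_i < d`. -/
def wordStem : List (Fin d) → Grp c d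
  | [] => 1
  | i :: l => b c d ^ (i : ℕ) * a c d * wordStem l

/-- `Σ_k`: the set of stems of height `k`. -/
def SigmaSet (k : ℕ) : Set (Grp c d) :=
  {g | ∃ l : List (Fin d), l.length = k ∧ wordStem c d l = g}

/-- The data `(l, t)` of a normal-form decomposition `x = (b^{s₀} a ⋯ b^{s_{k-1}} a) * b^t`,
chosen by choice when it exists (it exists, uniquely, for every `x ∈ P`). -/
noncomputable def nf (x : Grp c d) : List (Fin d) × ℕ :=
  if h : ∃ p : List (Fin d) × ℕ, x = wordStem c d p.1 * b c d ^ p.2 then h.choose else ([], 0)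

/-- The stem of `x`, i.e. the stem part of the normal form of `x`. -/
noncomputable def stem (x : Grp c d) : Grp c d := wordStem c d (nf c d x).1

/-- The left-invariant partial order on `BS(c,d)`: `g ≤ h` iff `g⁻¹ * h ∈ P`. -/
def bsLe (g h : Grp c d) : Prop := g⁻¹ * h ∈ P c d

lemma a_mem_P : a c d ∈ P c d := Submonoid.subset_closure (Set.mem_insert _ _)

lemma b_mem_P : b c d ∈ P c d :=
  Submonoid.subset_closure (Set.mem_insert_of_mem _ rfl)

lemma wordStem_mem_P (l : List (Fin d)) : wordStem c d l ∈ P c d := by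
  induction l with
  | nil => exact one_mem _
  | cons i l ih =>
      exact mul_mem (mul_mem (pow_mem (b_mem_P c d) _) (a_mem_P c d)) ih

/-!
Every element of `P` is `wordStem l * b ^ n` for a unique pair `(l, n)`: existence by pushing
powers of `b` to the right through `b ^ d * a = a * b ^ c`, uniqueness from the normal form
theorem for `BS(c,d)` viewed as the HNN extension of `ℤ` along `cℤ ≅ dℤ`. If `g ≤ h` in `P` then
the stem `l` of `g` is a prefix of that of `h`. So the stems of `x` and `y`, both prefixes of the
stem of a common upper bound, are nested, the shorter one (of smaller height) being that of `x`.
Then `x ≤ y * b ^ R` for some `R`, because for every `p ∈ P` and `r` some `b ^ (-r) * p * b ^ R`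
lies in `P`. Hence `y ≤ z ≤ y * b ^ R`, and an element of `P` below a power of `b` is itself a power
of `b`.
-/

section ZPowers

variable {G : Type*} [Group G]

noncomputable def zpowersEquivOfNotIsOfFinOrder {x : G} (hx : ¬IsOfFinOrder x) :
    Multiplicative ℤ ≃* Subgroup.zpowers x :=
  MulEquiv.ofBijective (zpowersHom G x).rangeRestrict
    ⟨MonoidHom.rangeRestrict_injective_iff.2 (injective_zpow_iff_not_isOfFinOrder.2 hx),
      MonoidHom.rangeRestrict_surjective _⟩

lemma coe_zpowersEquivOfNotIsOfFinOrder_apply {x : G} (hx : ¬IsOfFinOrder x)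
    (k : Multiplicative ℤ) : (zpowersEquivOfNotIsOfFinOrder hx k : G) = x ^ k.toAdd := rfl

noncomputable def zpowersMulEquiv {x y : G} (hx : ¬IsOfFinOrder x)
    (hy : ¬IsOfFinOrder y) : Subgroup.zpowers x ≃* Subgroup.zpowers y :=
  (zpowersEquivOfNotIsOfFinOrder hx).symm.trans (zpowersEquivOfNotIsOfFinOrder hy)

lemma zpowersMulEquiv_apply_self {x y : G} (hx : ¬IsOfFinOrder x)
    (hy : ¬IsOfFinOrder y) :
    zpowersMulEquiv hx hy ⟨x, Subgroup.mem_zpowers x⟩ = ⟨y, Subgroup.mem_zpowers y⟩ := by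
  have hx1 : zpowersEquivOfNotIsOfFinOrder hx (Multiplicative.ofAdd 1) =
      ⟨x, Subgroup.mem_zpowers x⟩ := Subtype.ext (zpow_one x)
  rw [zpowersMulEquiv, MulEquiv.trans_apply, ← hx1, MulEquiv.symm_apply_apply]
  exact Subtype.ext (zpow_one y)

end ZPowers

section Archimedean

variable {G : Type*} [CommGroup G] [LinearOrder G] [IsOrderedMonoid G] [MulArchimedean G]

lemma isComplement_zpowers_Ioc {x : G} (hx : 1 < x) (y : G) :
    Subgroup.IsComplement (Subgroup.zpowers x : Set G) (Set.Ioc y (y * x)) := by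
  rw [Subgroup.isComplement_iff_existsUnique_inv_mul_mem]
  intro g
  have hfin : ¬IsOfFinOrder x := not_isOfFinOrder_of_isMulTorsionFree hx.ne'
  refine (zpowersEquivOfNotIsOfFinOrder hfin).bijective.existsUnique_iff.2 ?_
  simp only [coe_zpowersEquivOfNotIsOfFinOrder_apply, ← div_eq_inv_mul]
  exact existsUnique_sub_zpow_mem_Ioc hx g y

open HNNExtension.NormalWord in
noncomputable def TransversalPair.Ioc {x y : G} (hx : 1 < x) (hy : 1 < y) :
    TransversalPair G (Subgroup.zpowers x) (Subgroup.zpowers y) where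
  set u := if u = 1 then Set.Ioc x⁻¹ 1 else Set.Ioc y⁻¹ 1
  compl u := by
    unfold HNNExtension.toSubgroup
    split_ifs
    · simpa using isComplement_zpowers_Ioc hx x⁻¹
    · simpa using isComplement_zpowers_Ioc hy y⁻¹

end Archimedean

section Monoid

variable {c d}

lemma a_mul_b_pow : a c d * b c d ^ c = b c d ^ d * a c d := by
  have h : PresentedGroup.mk (rels c d) (FreeGroup.of true * FreeGroup.of false ^ c *
      (FreeGroup.of false ^ d * FreeGroup.of true)⁻¹) = 1 :=
    (QuotientGroup.eq_one_iff _).2 (Subgroup.subset_normalClosure rfl)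
  simp only [map_mul, map_inv, map_pow] at h
  exact mul_inv_eq_one.mp h

lemma b_pow_mul_a (q : ℕ) : b c d ^ (d * q) * a c d = a c d * b c d ^ (c * q) := by
  induction q with
  | zero => simp
  | succ q ih =>
    rw [mul_add_one, pow_add, mul_assoc, ← a_mul_b_pow, ← mul_assoc, ih, mul_assoc, ← pow_add,
      mul_add_one]

lemma wordStem_append (l l' : List (Fin d)) :
    wordStem c d (l ++ l') = wordStem c d l * wordStem c d l' := by
  induction l with
  | nil => simp [wordStem]
  | cons i l ih => simp [wordStem, ih, mul_assoc]

lemma wordStem_concat (l : List (Fin d)) (i : Fin d) :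
    wordStem c d (l ++ [i]) = wordStem c d l * b c d ^ (i : ℕ) * a c d := by
  simp [wordStem_append, wordStem, mul_assoc]

lemma exists_eq_wordStem_mul_b_pow (hd : 0 < d) {g : Grp c d} (hg : g ∈ P c d) :
    ∃ p : List (Fin d) × ℕ, g = wordStem c d p.1 * b c d ^ p.2 := by
  induction hg using Submonoid.closure_induction_right with
  | one => exact ⟨([], 0), by simp [wordStem]⟩
  | mul_right g _ s hs ih =>
    obtain ⟨⟨l, t⟩, rfl⟩ := ih
    rcases hs with rfl | rfl
    · -- `b^t a = b^(t % d) a b^(c (t / d))` pushes the excess through `a`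
      refine ⟨(l ++ [⟨t % d, Nat.mod_lt t hd⟩], c * (t / d)), ?_⟩
      conv_lhs => rw [← Nat.mod_add_div t d, pow_add, mul_assoc, mul_assoc, b_pow_mul_a]
      simp only [wordStem_concat, mul_assoc]
    · exact ⟨(l, t + 1), by rw [pow_succ, mul_assoc]⟩

lemma exists_inv_b_pow_mul_mul_b_pow_mem (hd : 0 < d) {g : Grp c d} (hg : g ∈ P c d) (r : ℕ) :
    ∃ R : ℕ, (b c d ^ r)⁻¹ * g * b c d ^ R ∈ P c d := by
  induction hg using Submonoid.closure_induction generalizing r with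
  | mem s hs =>
    rcases hs with rfl | rfl
    · refine ⟨c * r, ?_⟩
      have hr : r ≤ d * r := Nat.le_mul_of_pos_left r hd
      rw [mul_assoc, ← b_pow_mul_a, ← Nat.add_sub_cancel' hr, pow_add, ← mul_assoc,
        inv_mul_cancel_left]
      exact mul_mem (pow_mem (b_mem_P c d) _) (a_mem_P c d)
    · refine ⟨r, ?_⟩
      rw [mul_assoc, ← pow_succ', pow_succ, inv_mul_cancel_left]
      exact b_mem_P c d
  | one => exact ⟨r, by simp [one_mem]⟩
  | mul g h _ _ ihg ihh =>
    obtain ⟨R₁, hR₁⟩ := ihg r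
    obtain ⟨R₂, hR₂⟩ := ihh R₁
    refine ⟨R₂, ?_⟩
    convert mul_mem hR₁ hR₂ using 1
    group

end Monoid

section HNN

open Multiplicative HNNExtension HNNExtension.NormalWord

variable {c d}

lemma one_lt_ofAdd_natCast {n : ℕ} (hn : 0 < n) : 1 < ofAdd (n : ℤ) := by
  simpa [← ofAdd_zero] using hn

lemma not_isOfFinOrder_ofAdd_natCast {n : ℕ} (hn : 0 < n) : ¬IsOfFinOrder (ofAdd (n : ℤ)) :=
  not_isOfFinOrder_of_isMulTorsionFree (one_lt_ofAdd_natCast hn).ne'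

lemma ofAdd_one_pow (n : ℕ) : ofAdd (1 : ℤ) ^ n = ofAdd (n : ℤ) := by
  rw [← ofAdd_nsmul, nsmul_one]

noncomputable abbrev bsEquiv (hc : 0 < c) (hd : 0 < d) :
    Subgroup.zpowers (ofAdd (c : ℤ)) ≃* Subgroup.zpowers (ofAdd (d : ℤ)) :=
  zpowersMulEquiv (not_isOfFinOrder_ofAdd_natCast hc) (not_isOfFinOrder_ofAdd_natCast hd)

abbrev bsHNN (hc : 0 < c) (hd : 0 < d) :=
  HNNExtension (Multiplicative ℤ) _ _ (bsEquiv hc hd)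

noncomputable def toBSHNN (hc : 0 < c) (hd : 0 < d) : Grp c d →* bsHNN hc hd :=
  PresentedGroup.toGroup (f := fun x => if x then t else of (ofAdd 1)) <| by
    rintro r rfl
    simp only [map_mul, map_inv, map_pow, FreeGroup.lift_apply_of, if_true, Bool.false_eq_true,
      if_false, mul_inv_eq_one]
    rw [← map_pow of, ← map_pow of, ofAdd_one_pow, ofAdd_one_pow,
      t_mul_of ⟨_, Subgroup.mem_zpowers _⟩, zpowersMulEquiv_apply_self]

lemma toBSHNN_a (hc : 0 < c) (hd : 0 < d) : toBSHNN hc hd (a c d) = t := by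
  simp [toBSHNN, a]

lemma toBSHNN_b_pow (hc : 0 < c) (hd : 0 < d) (n : ℕ) :
    toBSHNN hc hd (b c d ^ n) = of (ofAdd (n : ℤ)) := by
  simp [toBSHNN, b, ← map_pow of, ofAdd_one_pow]

/-- The normal form of `(wordStem l * b ^ n)⁻¹`: after inversion each digit `i < d` becomes the
letter `t⁻¹ * of (-i)`, and `-i ∈ (-d, 0]` is the chosen representative of its coset of `dℤ`. -/
noncomputable def invNormalWord (hc : 0 < c) (hd : 0 < d) (l : List (Fin d)) (n : ℕ) :
    NormalWord (TransversalPair.Ioc (one_lt_ofAdd_natCast hc) (one_lt_ofAdd_natCast hd)) where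
  head := ofAdd (-(n : ℤ))
  toList := l.reverse.map fun i : Fin d => (-1, ofAdd (-(i : ℤ)))
  mem_set := by
    simp only [List.mem_map, Prod.mk.injEq]
    rintro u g ⟨i, -, rfl, rfl⟩
    have hi : (i : ℤ) < d := by exact_mod_cast i.2
    dsimp only [TransversalPair.Ioc]
    rw [if_neg (by decide), ← ofAdd_neg, ← ofAdd_zero]
    exact ⟨ofAdd_lt.2 (by omega), ofAdd_le.2 (by omega)⟩
  chain := (List.isChain_map _).2 (List.pairwise_of_forall fun _ _ _ => rfl).isChain

lemma invNormalWord_prod (hc : 0 < c) (hd : 0 < d) (l : List (Fin d)) (n : ℕ) :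
    (invNormalWord hc hd l n).prod (bsEquiv hc hd) =
      toBSHNN hc hd (wordStem c d l * b c d ^ n)⁻¹ := by
  suffices h : ((l.reverse.map fun i : Fin d => ((-1 : ℤˣ), ofAdd (-(i : ℤ)))).map
      fun x => (t : bsHNN hc hd) ^ (x.1 : ℤ) * of x.2).prod = (toBSHNN hc hd (wordStem c d l))⁻¹ by
    rw [mul_inv_rev, map_mul, map_inv, map_inv, toBSHNN_b_pow, ← h, ← map_inv, ← ofAdd_neg]
    rfl
  induction l with
  | nil => simp [wordStem]
  | cons i l ih =>
    rw [List.reverse_cons, List.map_append, List.map_append, List.prod_append, ih]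
    simp only [wordStem, map_mul, toBSHNN_a, toBSHNN_b_pow, List.map_cons, List.map_nil,
      List.prod_cons, List.prod_nil, mul_one, Units.val_neg, Units.val_one, zpow_neg, zpow_one,
      ofAdd_neg, map_inv, mul_inv_rev, mul_assoc]

theorem wordStem_mul_b_pow_injective (hc : 0 < c) (hd : 0 < d) :
    Function.Injective fun p : List (Fin d) × ℕ => wordStem c d p.1 * b c d ^ p.2 := by
  rintro ⟨l, n⟩ ⟨l', n'⟩ h
  have hw : invNormalWord hc hd l n = invNormalWord hc hd l' n' :=
    prod_injective (bsEquiv hc hd) _ <| by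
      simp only [invNormalWord_prod]
      exact congrArg _ (congrArg _ h)
  have hhead := congrArg (fun w => toAdd w.head) hw
  have hlist := congrArg (fun w => w.toList) hw
  simp only [invNormalWord, toAdd_ofAdd, neg_inj, Nat.cast_inj] at hhead hlist
  refine Prod.ext (List.reverse_injective (List.map_injective_iff.2 ?_ hlist)) hhead
  intro i j hij
  simpa [Fin.ext_iff] using hij

end HNN

section NormalForm

variable {c d}

lemma nf_wordStem_mul_b_pow (hc : 0 < c) (hd : 0 < d) (l : List (Fin d)) (n : ℕ) :
    nf c d (wordStem c d l * b c d ^ n) = (l, n) := by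
  have h : ∃ p : List (Fin d) × ℕ, wordStem c d l * b c d ^ n = wordStem c d p.1 * b c d ^ p.2 :=
    ⟨(l, n), rfl⟩
  rw [nf, dif_pos h]
  exact wordStem_mul_b_pow_injective hc hd h.choose_spec.symm

lemma toAdd_map_wordStem {θ : Grp c d →* Multiplicative ℤ}
    (hθa : θ (a c d) = Multiplicative.ofAdd 1) (hθb : θ (b c d) = 1) (l : List (Fin d)) :
    Multiplicative.toAdd (θ (wordStem c d l)) = l.length := by
  induction l with
  | nil => simp [wordStem]
  | cons i l ih =>
    simp only [wordStem, map_mul, map_pow, hθa, hθb, one_pow, one_mul, toAdd_mul, ih,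
      toAdd_ofAdd, List.length_cons]
    push_cast
    ring

lemma toAdd_map_of_mem_P (hc : 0 < c) (hd : 0 < d) {θ : Grp c d →* Multiplicative ℤ}
    (hθa : θ (a c d) = Multiplicative.ofAdd 1) (hθb : θ (b c d) = 1) {g : Grp c d}
    (hg : g ∈ P c d) : Multiplicative.toAdd (θ g) = (nf c d g).1.length := by
  obtain ⟨⟨l, n⟩, rfl⟩ := exists_eq_wordStem_mul_b_pow hd hg
  rw [nf_wordStem_mul_b_pow hc hd, map_mul, map_pow, hθb, one_pow, mul_one,
    toAdd_map_wordStem hθa hθb]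

lemma nf_fst_prefix_of_bsLe (hc : 0 < c) (hd : 0 < d) {g h : Grp c d} (hg : g ∈ P c d)
    (hgh : bsLe c d g h) : (nf c d g).1 <+: (nf c d h).1 := by
  obtain ⟨⟨l, n⟩, rfl⟩ := exists_eq_wordStem_mul_b_pow hd hg
  obtain ⟨⟨m, k⟩, hmk⟩ :=
    exists_eq_wordStem_mul_b_pow hd (mul_mem (pow_mem (b_mem_P c d) n) hgh)
  have hh : h = wordStem c d (l ++ m) * b c d ^ k := by
    rw [wordStem_append, mul_assoc, ← hmk]
    group
  rw [hh, nf_wordStem_mul_b_pow hc hd, nf_wordStem_mul_b_pow hc hd]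
  exact ⟨m, rfl⟩

lemma exists_eq_b_pow_of_bsLe_b_pow (hc : 0 < c) (hd : 0 < d) {g : Grp c d} (hg : g ∈ P c d)
    {R : ℕ} (hgR : bsLe c d g (b c d ^ R)) : ∃ t : ℕ, g = b c d ^ t := by
  have hnil : nf c d (b c d ^ R) = ([], R) := by
    simpa [wordStem] using nf_wordStem_mul_b_pow hc hd ([] : List (Fin d)) R
  have hpre := nf_fst_prefix_of_bsLe hc hd hg hgR
  obtain ⟨⟨l, n⟩, rfl⟩ := exists_eq_wordStem_mul_b_pow hd hg
  rw [nf_wordStem_mul_b_pow hc hd, hnil, List.prefix_nil] at hpre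
  obtain rfl : l = [] := hpre
  exact ⟨n, one_mul _⟩

lemma exists_bsLe_mul_b_pow_of_prefix (hc : 0 < c) (hd : 0 < d) {g h : Grp c d}
    (hg : g ∈ P c d) (hh : h ∈ P c d) (hpre : (nf c d g).1 <+: (nf c d h).1) :
    ∃ R : ℕ, bsLe c d g (h * b c d ^ R) := by
  obtain ⟨⟨l, n⟩, rfl⟩ := exists_eq_wordStem_mul_b_pow hd hg
  obtain ⟨⟨l', k⟩, rfl⟩ := exists_eq_wordStem_mul_b_pow hd hh
  rw [nf_wordStem_mul_b_pow hc hd, nf_wordStem_mul_b_pow hc hd] at hpre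
  obtain ⟨m, rfl⟩ := hpre
  obtain ⟨R, hR⟩ := exists_inv_b_pow_mul_mul_b_pow_mem hd
    (mul_mem (wordStem_mem_P c d m) (pow_mem (b_mem_P c d) k)) n
  refine ⟨R, ?_⟩
  rw [bsLe]
  convert hR using 1
  simp only [mul_inv_rev, wordStem_append, mul_assoc, inv_mul_cancel_left]

end NormalForm

theorem statement4_general (c d : ℕ) (hc : 0 < c) (hd : 0 < d)
    (θ : Grp c d →* Multiplicative ℤ)
    (hθa : θ (a c d) = Multiplicative.ofAdd 1) (hθb : θ (b c d) = 1)
    (x y z : Grp c d) (hx : x ∈ P c d) (hy : y ∈ P c d)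
    (hub : ∃ w ∈ P c d, bsLe c d x w ∧ bsLe c d y w)
    (hyz : bsLe c d y z)
    (hlub : ∀ w ∈ P c d, bsLe c d x w → bsLe c d y w → bsLe c d z w)
    (hθ : Multiplicative.toAdd (θ x) < Multiplicative.toAdd (θ y)) :
    ∃ t : ℕ, z = y * b c d ^ t := by
  obtain ⟨w, -, hxw, hyw⟩ := hub
  have hlen : (nf c d x).1.length ≤ (nf c d y).1.length := by
    have h := hθ.le
    rwa [toAdd_map_of_mem_P hc hd hθa hθb hx, toAdd_map_of_mem_P hc hd hθa hθb hy, Nat.cast_le] at h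
  have hpre : (nf c d x).1 <+: (nf c d y).1 := List.prefix_of_prefix_length_le
    (nf_fst_prefix_of_bsLe hc hd hx hxw) (nf_fst_prefix_of_bsLe hc hd hy hyw) hlen
  obtain ⟨R, hxR⟩ := exists_bsLe_mul_b_pow_of_prefix hc hd hx hy hpre
  have hyR : bsLe c d y (y * b c d ^ R) := by
    simpa [bsLe] using pow_mem (b_mem_P c d) R
  have hzR : bsLe c d z (y * b c d ^ R) :=
    hlub _ (mul_mem hy (pow_mem (b_mem_P c d) R)) hxR hyR
  obtain ⟨t, ht⟩ := exists_eq_b_pow_of_bsLe_b_pow hc hd hyz (R := R) <| by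
    simpa [bsLe, mul_assoc] using hzR
  exact ⟨t, by rw [← ht, mul_inv_cancel_left]⟩

/-- If x, y ∈ P have a common upper bound in P and z ∈ P is a least upper bound of
x and y, and if θ(y) > θ(x), then z = y·b^t for some t ∈ ℕ. -/
theorem statement4 (c d : ℕ) (hc : 0 < c) (hd : 0 < d)
    (θ : Grp c d →* Multiplicative ℤ)
    (hθa : θ (a c d) = Multiplicative.ofAdd 1) (hθb : θ (b c d) = 1)
    (x y z : Grp c d) (hx : x ∈ P c d) (hy : y ∈ P c d) (hz : z ∈ P c d)
    (hub : ∃ w ∈ P c d, bsLe c d x w ∧ bsLe c d y w)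
    (hxz : bsLe c d x z) (hyz : bsLe c d y z)
    (hlub : ∀ w ∈ P c d, bsLe c d x w → bsLe c d y w → bsLe c d z w)
    (hθ : Multiplicative.toAdd (θ x) < Multiplicative.toAdd (θ y)) :
    ∃ t : ℕ, z = y * b c d ^ t :=
  statement4_general c d hc hd θ hθa hθb x y z hx hy hub hyz hlub hθ

end BSpaper
end

section
/- Let w : List (Fin d) → G be defined by w([s_0, …, s_{k-1}]) = b^{s_0} a b^{s_1} a ⋯ b^{s_{k-1}} a (and w([]) = e). Then for every m ∈ ℕ and every σ ∈ List (Fin d): b^m · w(σ) = w(act m σ) · b^{carry m σ}, and act m σ has the same length as σ. -/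
open scoped Classical

namespace BSpaper

variable (c d : ℕ)

/-- `act m σ`: the digit string of the stem of `b^m · w(σ)`. -/
def act (c : ℕ) {d : ℕ} : ℕ → List (Fin d) → List (Fin d)
  | _, [] => []
  | m, i :: σ => ⟨(m + (i : ℕ)) % d, Nat.mod_lt _ i.pos⟩ :: act c (c * ((m + (i : ℕ)) / d)) σ

/-- `carry m σ`: the power of `b` emerging on the right when `b^m` is pulled through `w(σ)`. -/
def carry (c : ℕ) {d : ℕ} : ℕ → List (Fin d) → ℕ
  | m, [] => m
  | m, i :: σ => carry c (c * ((m + (i : ℕ)) / d)) σ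

/-! Pushing `b^m` rightwards through the factor `b^i a` of a stem: write `m + i = q d + r` with
`r < d`; the relation `b^d a = a b^c` turns `b^{qd} a` into `a b^{qc}`, leaving the digit `r`
in place and `b^{qc}` to be carried into the rest of the word. -/

lemma semiconjBy_a : SemiconjBy (a c d) (b c d ^ c) (b c d ^ d) := by
  have hrel : a c d * b c d ^ c * (b c d ^ d * a c d)⁻¹ = 1 := by
    simpa [a, b, PresentedGroup.of] using
      PresentedGroup.one_of_mem (rels := rels c d) (Set.mem_singleton _)
  exact mul_inv_eq_one.mp hrel

lemma b_pow_pow_mul_a (q : ℕ) : (b c d ^ d) ^ q * a c d = a c d * (b c d ^ c) ^ q :=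
  ((semiconjBy_a c d).pow_right q).symm

lemma b_pow_mul_b_pow_mul_a (m i : ℕ) :
    b c d ^ m * (b c d ^ i * a c d) =
      b c d ^ ((m + i) % d) * a c d * b c d ^ (c * ((m + i) / d)) := by
  conv_lhs => rw [← mul_assoc, ← pow_add, ← Nat.mod_add_div (m + i) d, pow_add, pow_mul,
    mul_assoc, b_pow_pow_mul_a, ← pow_mul, ← mul_assoc]

lemma b_pow_mul_wordStem (m : ℕ) (σ : List (Fin d)) :
    b c d ^ m * wordStem c d σ = wordStem c d (act c m σ) * b c d ^ carry c m σ := by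
  induction σ generalizing m with
  | nil => simp [act, carry, wordStem]
  | cons i σ ih =>
    calc b c d ^ m * wordStem c d (i :: σ)
        = b c d ^ m * (b c d ^ (i : ℕ) * a c d) * wordStem c d σ := by
          simp only [wordStem, mul_assoc]
      _ = b c d ^ ((m + i) % d) * a c d * (b c d ^ (c * ((m + i) / d)) * wordStem c d σ) := by
          rw [b_pow_mul_b_pow_mul_a, mul_assoc]
      _ = wordStem c d (act c m (i :: σ)) * b c d ^ carry c m (i :: σ) := by
          rw [ih]
          simp only [act, carry, wordStem, mul_assoc]

lemma length_act (c : ℕ) {d : ℕ} (m : ℕ) (σ : List (Fin d)) : (act c m σ).length = σ.length := by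
  induction σ generalizing m with
  | nil => rfl
  | cons i σ ih => simp only [act, List.length_cons, ih]

theorem statement13_general (c d : ℕ) (m : ℕ) (σ : List (Fin d)) :
    b c d ^ m * wordStem c d σ = wordStem c d (act c m σ) * b c d ^ carry c m σ ∧
      (act c m σ).length = σ.length :=
  ⟨b_pow_mul_wordStem c d m σ, length_act c m σ⟩

/-- With w([s₀, …, s_{k-1}]) = b^{s₀} a ⋯ b^{s_{k-1}} a, for every m ∈ ℕ and every
σ ∈ List (Fin d): b^m · w(σ) = w(act m σ) · b^(carry m σ), and act m σ has the same
length as σ. -/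
theorem statement13 (c d : ℕ) (hc : 0 < c) (hd : 0 < d) (m : ℕ) (σ : List (Fin d)) :
    b c d ^ m * wordStem c d σ = wordStem c d (act c m σ) * b c d ^ carry c m σ ∧
      (act c m σ).length = σ.length :=
  statement13_general c d m σ

end BSpaper
end
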